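/- arXiv:0709.2511 — 5 statements merged into one kernel-verified Lean document; each statement's English description precedes it below -/
import Mathlib

section
/- Let g ∈ ℝ[x,y] be a homogeneous polynomial of degree at least 2. Then the following conditions are equivalent: (1) g is squarefree; (2) neither ∂g/∂x nor ∂g/∂y is the zero polynomial, and ∂g/∂x and ∂g/∂y are relatively prime in the ring ℝ[x,y] (their greatest common divisor is a unit). -/
/-!
Euler's identity `∑ Xᵢ ∂ᵢg = d • g` carries the forward implication. A prime `p` dividing every
`∂ᵢg` divides `g`; writing `g = p h` with `p ∤ h`, the Leibniz rule gives `p ∣ ∂ᵢp`, which for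
degree reasons forces `∂ᵢp = 0` for every `i`, so `p` is constant. If `∂ₓg = 0`, Euler's identity
for `g` and for `∂_y g` gives `d (d - 1) g = y² ∂_y² g`. Conversely, `q² ∣ g` implies `q ∣ ∂ᵢg`.
-/

open MvPolynomial

namespace Derivation

variable {R A : Type*} [CommSemiring R] [CommRing A] [Algebra R A] (D : Derivation R A A)

lemma dvd_apply_of_mul_self_dvd {q a : A} (h : q * q ∣ a) : q ∣ D a := by
  obtain ⟨c, rfl⟩ := h
  exact ⟨q * D c + 2 * c * D q, by simp only [leibniz, smul_eq_mul]; ring⟩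

lemma _root_.Prime.dvd_apply_self {p a : A} (hp : Prime p) (ha : Squarefree a) (hpa : p ∣ a)
    (hpDa : p ∣ D a) : p ∣ D p := by
  obtain ⟨h, rfl⟩ := hpa
  have hph : ¬p ∣ h := fun ⟨k, hk⟩ => hp.not_isUnit (ha p ⟨k, by rw [hk, mul_assoc]⟩)
  rw [leibniz, smul_eq_mul, smul_eq_mul, dvd_add_right (dvd_mul_right p _)] at hpDa
  exact (hp.dvd_or_dvd hpDa).resolve_left hph

end Derivation

lemma dvd_of_dvd_nsmul {A : Type*} [CommSemiring A] [Algebra ℚ A] {q a : A} {n : ℕ} (hn : n ≠ 0)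
    (h : q ∣ n • a) : q ∣ a := by
  have hu : IsUnit (n : A) := by
    simpa using
      (isUnit_iff_ne_zero.mpr (Nat.cast_ne_zero.mpr hn : (n : ℚ) ≠ 0)).map (algebraMap ℚ A)
  rwa [nsmul_eq_mul, hu.dvd_mul_left] at h

namespace MvPolynomial

variable {R σ : Type*}

section CommSemiring

variable [CommSemiring R] {p : MvPolynomial σ R} {i : σ}

lemma degreeOf_pderiv_lt (h : pderiv i p ≠ 0) : degreeOf i (pderiv i p) < degreeOf i p := by
  have key : ∀ m ∈ (pderiv i p).support, m i < degreeOf i p := by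
    intro m hm
    rw [mem_support_iff, coeff_pderiv] at hm
    simpa using monomial_le_degreeOf i (mem_support_iff.mpr (left_ne_zero_of_mul hm))
  obtain ⟨m, hm⟩ := support_nonempty.mpr h
  exact (degreeOf_lt_iff (pos_of_gt (key m hm))).mpr key

lemma pderiv_eq_zero_of_dvd_pderiv [NoZeroDivisors R] (h : p ∣ pderiv i p) : pderiv i p = 0 := by
  by_contra hne
  obtain ⟨k, hk⟩ := h
  have hp : p ≠ 0 := by rintro rfl; simp at hne
  have hk0 : k ≠ 0 := by rintro rfl; simp_all
  have := degreeOf_pderiv_lt hne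
  rw [hk, degreeOf_mul_eq hp hk0] at this
  omega

variable [NoZeroDivisors R] [CharZero R]

lemma coeff_eq_zero_of_pderiv_eq_zero (h : pderiv i p = 0) {m : σ →₀ ℕ} (hm : m i ≠ 0) :
    coeff m p = 0 := by
  have hc := coeff_pderiv (i := i) p (m - Finsupp.single i 1)
  rw [h, coeff_zero, tsub_add_cancel_of_le
    (Finsupp.single_le_iff.mpr (Nat.one_le_iff_ne_zero.mpr hm))] at hc
  exact (mul_eq_zero.mp hc.symm).resolve_right (Nat.cast_add_one_ne_zero _)

lemma eq_C_of_forall_pderiv_eq_zero (h : ∀ i, pderiv i p = 0) : p = C (coeff 0 p) := by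
  classical
  ext m
  rw [coeff_C]
  split_ifs with hm
  · rw [hm]
  · obtain ⟨i, hi⟩ := Finsupp.support_nonempty_iff.mpr (Ne.symm hm)
    exact coeff_eq_zero_of_pderiv_eq_zero (h i) (Finsupp.mem_support_iff.mp hi)

end CommSemiring

lemma pderiv_pderiv_comm [CommRing R] (i j : σ) (p : MvPolynomial σ R) :
    pderiv i (pderiv j p) = pderiv j (pderiv i p) := by
  classical
  have : ⁅pderiv i, pderiv j⁆ = (0 : Derivation R (MvPolynomial σ R) (MvPolynomial σ R)) :=
    derivation_ext fun k => by
      rw [Derivation.commutator_apply]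
      simp [pderiv_X, Pi.single_apply, apply_ite]
  exact sub_eq_zero.mp (congr($this p))

section Homogeneous

variable [Fintype σ] {n : ℕ}

lemma IsHomogeneous.X_mul_pderiv_eq_nsmul [CommSemiring R] {φ : MvPolynomial σ R}
    (hφ : φ.IsHomogeneous n) {j : σ} (h : ∀ k ≠ j, pderiv k φ = 0) :
    X j * pderiv j φ = n • φ := by
  rw [← hφ.sum_X_mul_pderiv,
    Finset.sum_eq_single j (fun k _ hk => by rw [h k hk, mul_zero]) (by simp)]

variable [Field R] [CharZero R] {φ : MvPolynomial σ R}

lemma IsHomogeneous.X_sq_dvd_of_forall_pderiv_eq_zero (hφ : φ.IsHomogeneous n) (hn : 2 ≤ n)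
    {j : σ} (h : ∀ k ≠ j, pderiv k φ = 0) : X j ^ 2 ∣ φ := by
  have h' : ∀ k ≠ j, pderiv k (pderiv j φ) = 0 := fun k hk => by
    rw [pderiv_pderiv_comm, h k hk, map_zero]
  refine dvd_of_dvd_nsmul (n := (n - 1) * n) (Nat.mul_ne_zero (by omega) (by omega))
    ⟨pderiv j (pderiv j φ), ?_⟩
  calc ((n - 1) * n) • φ = (n - 1) • (X j * pderiv j φ) := by
        rw [mul_smul, hφ.X_mul_pderiv_eq_nsmul h]
    _ = X j * (X j * pderiv j (pderiv j φ)) := by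
        rw [← mul_smul_comm, hφ.pderiv.X_mul_pderiv_eq_nsmul h']
    _ = X j ^ 2 * pderiv j (pderiv j φ) := by ring

lemma IsHomogeneous.dvd_of_forall_dvd_pderiv (hφ : φ.IsHomogeneous n) (hn : n ≠ 0)
    {q : MvPolynomial σ R} (h : ∀ i, q ∣ pderiv i φ) : q ∣ φ :=
  dvd_of_dvd_nsmul hn <| hφ.sum_X_mul_pderiv ▸ Finset.dvd_sum fun i _ => (h i).mul_left _

lemma _root_.Squarefree.not_forall_dvd_pderiv (hsf : Squarefree φ) (hφ : φ.IsHomogeneous n)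
    (hn : n ≠ 0) {p : MvPolynomial σ R} (hp : Prime p) : ¬∀ i, p ∣ pderiv i φ := by
  intro h
  have hpφ := hφ.dvd_of_forall_dvd_pderiv hn h
  have hpC : p = C (coeff 0 p) := eq_C_of_forall_pderiv_eq_zero fun i =>
    pderiv_eq_zero_of_dvd_pderiv (hp.dvd_apply_self (pderiv i) hsf hpφ (h i))
  have hc : coeff 0 p ≠ 0 := fun hc => hp.ne_zero (by rw [hpC, hc, map_zero])
  exact hp.not_isUnit (hpC ▸ (isUnit_iff_ne_zero.mpr hc).map C)

lemma _root_.Squarefree.pderiv_ne_zero {φ : MvPolynomial (Fin 2) R} (hsf : Squarefree φ)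
    (hφ : φ.IsHomogeneous n) (hn : 2 ≤ n) (i : Fin 2) : pderiv i φ ≠ 0 := by
  intro hi
  have hdvd : X i.rev ^ 2 ∣ φ := hφ.X_sq_dvd_of_forall_pderiv_eq_zero hn fun k hk => by
    obtain rfl : k = i := by fin_cases i <;> fin_cases k <;> simp_all
    exact hi
  exact (X_prime (R := R)).not_isUnit (hsf _ (by rwa [← sq]))

end Homogeneous

end MvPolynomial

theorem squarefree_iff_pderiv_relPrime_general
    (g : MvPolynomial (Fin 2) ℝ) (d : ℕ) (hd : 2 ≤ d)
    (hg : g.IsHomogeneous d) :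
    Squarefree g ↔
      (pderiv 0 g ≠ 0 ∧ pderiv 1 g ≠ 0 ∧ IsRelPrime (pderiv 0 g) (pderiv 1 g)) := by
  constructor
  · intro hsf
    have hpd := hsf.pderiv_ne_zero hg hd
    refine ⟨hpd 0, hpd 1, WfDvdMonoid.isRelPrime_of_no_irreducible_factors (fun h => hpd 0 h.1)
      fun p hp h0 h1 => ?_⟩
    exact hsf.not_forall_dvd_pderiv hg (by omega) hp.prime (Fin.forall_fin_two.mpr ⟨h0, h1⟩)
  · rintro ⟨-, -, hrel⟩ q hq
    exact hrel ((pderiv 0).dvd_apply_of_mul_self_dvd hq) ((pderiv 1).dvd_apply_of_mul_self_dvd hq)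

/-- Let `g ∈ ℝ[x,y]` be a homogeneous polynomial of degree at least 2.
Then `g` is squarefree if and only if neither partial derivative `∂g/∂x`, `∂g/∂y` is the
zero polynomial and they are relatively prime in `ℝ[x,y]` (every common divisor is a unit). -/
theorem squarefree_iff_pderiv_relPrime
    (g : MvPolynomial (Fin 2) ℝ) (d : ℕ) (hd : 2 ≤ d)
    (hne : g ≠ 0) (hg : g.IsHomogeneous d) :
    Squarefree g ↔
      (pderiv 0 g ≠ 0 ∧ pderiv 1 g ≠ 0 ∧ IsRelPrime (pderiv 0 g) (pderiv 1 g)) :=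
  squarefree_iff_pderiv_relPrime_general g d hd hg
end

section
/- Let g ∈ ℝ[x,y] be a squarefree homogeneous polynomial of degree at least 2. Then the origin (0,0) is the unique point of ℝ² at which both partial derivatives ∂g/∂x and ∂g/∂y vanish; that is, the origin is the unique critical point of the polynomial function g : ℝ² → ℝ. -/
/-!
By Euler's identity `d • g = X₀ ∂₀g + X₁ ∂₁g`, a homogeneous `g` vanishes at each of its critical
points. A binary form vanishing at `x ≠ 0` is divisible by the linear form `ℓ` cutting out the
line through `x` (dehomogenise and factor out the root). So at a critical point `x ≠ 0` the form
`ℓ` divides `g`, `∂₀g` and `∂₁g`; writing `g = ℓ h`, the Leibniz rule gives `ℓ ∣ (∂ᵢℓ) h` with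
`∂ᵢℓ` a nonzero constant for some `i`, hence `ℓ² ∣ g`, contradicting squarefreeness. The
partials vanish at the origin because they are homogeneous of degree `d - 1 ≥ 1`.
-/

namespace MvPolynomial

section CommRing

variable {σ R : Type*} [CommRing R] {φ : MvPolynomial σ R} {n : ℕ}

theorem IsHomogeneous.eval_zero_eq_zero (hφ : φ.IsHomogeneous n) (hn : n ≠ 0) :
    eval 0 φ = 0 := by
  rw [MvPolynomial.eval_zero, constantCoeff_eq]
  exact hφ.coeff_eq_zero (by simpa using hn.symm)

theorem IsHomogeneous.eval_eq_zero_of_eval_pderiv_eq_zero [Fintype σ] [NoZeroDivisors R]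
    [CharZero R] (hφ : φ.IsHomogeneous n) (hn : n ≠ 0) {x : σ → R}
    (hx : ∀ i, eval x (pderiv i φ) = 0) : eval x φ = 0 := by
  have h := congrArg (eval x) hφ.sum_X_mul_pderiv
  simp only [map_sum, map_mul, hx, mul_zero, Finset.sum_const_zero, nsmul_eq_mul, map_natCast] at h
  exact (mul_eq_zero.mp h.symm).resolve_left (Nat.cast_ne_zero.mpr hn)

theorem sq_dvd_of_dvd_pderiv {ℓ f : MvPolynomial σ R} {i : σ} (hu : IsUnit (pderiv i ℓ))
    (hf : ℓ ∣ f) (hf' : ℓ ∣ pderiv i f) : ℓ * ℓ ∣ f := by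
  obtain ⟨h, rfl⟩ := hf
  refine mul_dvd_mul_left ℓ (hu.dvd_mul_left.mp ?_)
  have : pderiv i ℓ * h = pderiv i (ℓ * h) - ℓ * pderiv i h := by
    rw [Derivation.leibniz, smul_eq_mul, smul_eq_mul]
    ring
  rw [this]
  exact dvd_sub hf' (dvd_mul_right ℓ _)

end CommRing

theorem natDegree_aeval_X_one_le_totalDegree {R : Type*} [CommSemiring R]
    (f : MvPolynomial (Fin 2) R) :
    (aeval ![(Polynomial.X : Polynomial R), 1] f).natDegree ≤ f.totalDegree := by
  conv_lhs => rw [f.as_sum]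
  rw [map_sum]
  refine Polynomial.natDegree_sum_le_of_forall_le _ _ fun m hm => ?_
  rw [aeval_monomial, Finsupp.prod_fintype _ _ (by simp), Fin.prod_univ_two]
  simp only [Matrix.cons_val_zero, Matrix.cons_val_one, one_pow, mul_one,
    ← Polynomial.C_eq_algebraMap]
  refine (Polynomial.natDegree_C_mul_X_pow_le _ _).trans ((?_ : m 0 ≤ _).trans (le_totalDegree hm))
  rw [Finsupp.sum_fintype _ _ (by simp), Fin.sum_univ_two]
  omega

section Binary

variable {K : Type*} [Field K]

noncomputable def detForm (x : Fin 2 → K) : MvPolynomial (Fin 2) K :=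
  C (x 1) * X 0 - C (x 0) * X 1

theorem eval_detForm_self (x : Fin 2 → K) : eval x (detForm x) = 0 := by
  simp [detForm, mul_comm]

theorem not_isUnit_detForm (x : Fin 2 → K) : ¬IsUnit (detForm x) := fun h ↦
  not_isUnit_zero (eval_detForm_self x ▸ h.map (eval x))

theorem pderiv_zero_detForm (x : Fin 2 → K) : pderiv 0 (detForm x) = C (x 1) := by
  simp [detForm, pderiv_X]

theorem pderiv_one_detForm (x : Fin 2 → K) : pderiv 1 (detForm x) = -C (x 0) := by
  simp [detForm, pderiv_X]

theorem exists_isUnit_pderiv_detForm {x : Fin 2 → K} (hx : x ≠ 0) :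
    ∃ i, IsUnit (pderiv i (detForm x)) := by
  by_cases h1 : x 1 = 0
  · have h0 : x 0 ≠ 0 := fun h0 ↦ hx (by ext i; fin_cases i <;> assumption)
    exact ⟨1, by simpa [pderiv_one_detForm] using h0⟩
  · exact ⟨0, by simpa [pderiv_zero_detForm] using h1⟩

theorem rename_swap_detForm (x : Fin 2 → K) :
    rename (Equiv.swap 0 1) (detForm (x ∘ Equiv.swap 0 1)) = -detForm x := by
  simp [detForm]

theorem detForm_dvd_of_eval_eq_zero_of_ne_zero {f : MvPolynomial (Fin 2) K} {n : ℕ}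
    (hf : f.IsHomogeneous n) {x : Fin 2 → K} (hx : x 1 ≠ 0) (h : eval x f = 0) :
    detForm x ∣ f := by
  set p : Polynomial K := aeval ![Polynomial.X, 1] f
  have hpn : p.natDegree ≤ n :=
    (natDegree_aeval_X_one_le_totalDegree f).trans hf.totalDegree_le
  have hfp : p.homogenize n = f := Polynomial.homogenize_eq_of_isHomogeneous hf rfl
  have hroot : p.IsRoot (x 0 / x 1) := by
    rw [← hfp, Polynomial.eval_homogenize hpn x hx] at h
    simpa [hx] using h
  obtain ⟨q, hpq⟩ := Polynomial.dvd_iff_isRoot.mpr hroot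
  rcases eq_or_ne q 0 with rfl | hq
  · simp [← hfp, hpq]
  have hdeg : p.natDegree = 1 + q.natDegree := by
    rw [hpq, Polynomial.natDegree_mul (Polynomial.X_sub_C_ne_zero _) hq,
      Polynomial.natDegree_X_sub_C]
  have hn : n = 1 + (n - 1) := by omega
  have hdet : detForm x = C (x 1) * (Polynomial.X - Polynomial.C (x 0 / x 1)).homogenize 1 := by
    simp only [detForm, Polynomial.homogenize_sub, Polynomial.homogenize_X one_ne_zero,
      Polynomial.homogenize_C, Nat.sub_self, pow_zero, pow_one, mul_one]
    rw [mul_sub, ← mul_assoc, ← C_mul, mul_div_cancel₀ _ hx]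
  have hu : IsUnit (C (x 1) : MvPolynomial (Fin 2) K) := hx.isUnit.map C
  have hmul := Polynomial.homogenize_mul (Polynomial.X - Polynomial.C (x 0 / x 1)) q
    (Polynomial.natDegree_X_sub_C_le _) (show q.natDegree ≤ n - 1 by omega)
  rw [← hpq, ← hn, hfp] at hmul
  rw [hdet, hu.mul_left_dvd, hmul]
  exact dvd_mul_right _ _

theorem detForm_dvd_of_eval_eq_zero {f : MvPolynomial (Fin 2) K} {n : ℕ}
    (hf : f.IsHomogeneous n) {x : Fin 2 → K} (hx : x ≠ 0) (h : eval x f = 0) :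
    detForm x ∣ f := by
  by_cases h1 : x 1 = 0
  · have hss : ⇑(Equiv.swap (0 : Fin 2) 1) ∘ Equiv.swap 0 1 = id := by
      ext i; simp
    have h0 : (x ∘ Equiv.swap 0 1) 1 ≠ 0 := fun h0 ↦ hx (by ext i; fin_cases i <;> simp_all)
    have hdvd := map_dvd (rename (Equiv.swap 0 1))
      (detForm_dvd_of_eval_eq_zero_of_ne_zero hf.rename_isHomogeneous h0
        (by rwa [eval_rename, Function.comp_assoc, hss, Function.comp_id]))
    rwa [rename_swap_detForm, rename_rename, hss, rename_id, AlgHom.id_apply, neg_dvd] at hdvd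
  · exact detForm_dvd_of_eval_eq_zero_of_ne_zero hf h1 h

end Binary

end MvPolynomial

open MvPolynomial

theorem origin_unique_critical_point_general
    (g : MvPolynomial (Fin 2) ℝ) (d : ℕ) (hd : 2 ≤ d)
    (hg : g.IsHomogeneous d) (hsf : Squarefree g) :
    {z : ℝ × ℝ | eval ![z.1, z.2] (pderiv 0 g) = 0 ∧ eval ![z.1, z.2] (pderiv 1 g) = 0}
      = {((0 : ℝ), (0 : ℝ))} := by
  have hpderiv (i : Fin 2) : (pderiv i g).IsHomogeneous (d - 1) := hg.pderiv
  ext ⟨a, b⟩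
  simp only [Set.mem_ofPred_eq, Set.mem_singleton_iff, Prod.mk.injEq]
  constructor
  · rintro ⟨h0, h1⟩
    by_contra hab
    set x : Fin 2 → ℝ := ![a, b]
    have hx : x ≠ 0 := fun hx ↦ hab ⟨congrFun hx 0, congrFun hx 1⟩
    have hcrit : ∀ i, eval x (pderiv i g) = 0 := Fin.forall_fin_two.mpr ⟨h0, h1⟩
    have hgx : eval x g = 0 := hg.eval_eq_zero_of_eval_pderiv_eq_zero (by omega) hcrit
    obtain ⟨i, hi⟩ := exists_isUnit_pderiv_detForm hx
    have hsq : detForm x * detForm x ∣ g := sq_dvd_of_dvd_pderiv hi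
      (detForm_dvd_of_eval_eq_zero hg hx hgx)
      (detForm_dvd_of_eval_eq_zero (hpderiv i) hx (hcrit i))
    exact not_isUnit_detForm x (hsf _ hsq)
  · rintro ⟨rfl, rfl⟩
    have h00 : ![(0 : ℝ), 0] = 0 := by simp
    simp only [h00]
    exact ⟨(hpderiv 0).eval_zero_eq_zero (by omega), (hpderiv 1).eval_zero_eq_zero (by omega)⟩

/-- Let `g ∈ ℝ[x,y]` be a squarefree homogeneous polynomial of degree
at least 2. Then the origin is the unique common zero of the partial derivatives
`∂g/∂x` and `∂g/∂y`, i.e. the unique critical point of `g : ℝ² → ℝ`. -/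
theorem origin_unique_critical_point
    (g : MvPolynomial (Fin 2) ℝ) (d : ℕ) (hd : 2 ≤ d)
    (hne : g ≠ 0) (hg : g.IsHomogeneous d) (hsf : Squarefree g) :
    {z : ℝ × ℝ | eval ![z.1, z.2] (pderiv 0 g) = 0 ∧ eval ![z.1, z.2] (pderiv 1 g) = 0}
      = {((0 : ℝ), (0 : ℝ))} :=
  origin_unique_critical_point_general g d hd hg hsf
end

section
/- Let p ≥ 1, let g ∈ ℝ[x,y] be a nonzero homogeneous polynomial of degree p+1, let η : ℝ² → ℝ be a smooth function with η(z) ≠ 0 for all z, and let G = (G₁,G₂) = η·(−∂g/∂y, ∂g/∂x). Write g(x,y) = y^a · R(x,y) where a ≥ 0 and R ∈ ℝ[x,y] is not divisible by y. Let P(φ,ρ) = (ρ cos φ, ρ sin φ). Then: (i) for all φ ∈ ℝ and ρ ≠ 0, (−G₁(P(φ,ρ))·sin φ + G₂(P(φ,ρ))·cos φ)/ρ = (p+1)·η(P(φ,ρ))·g(P(φ,ρ))/ρ²; (ii) there exists a smooth function γ₁ : ℝ → ℝ with γ₁(0) ≠ 0 such that g(ρ cos φ, ρ sin φ) = ρ^{p+1}·φ^a·γ₁(φ)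 for all φ, ρ ∈ ℝ, and consequently the quantity in (i) equals (p+1)·η(P(φ,ρ))·ρ^{p−1}·φ^a·γ₁(φ). -/
open MvPolynomial Real

private lemma degree_fin2 (d : Fin 2 →₀ ℕ) : d.degree = d 0 + d 1 := by
  rw [Finsupp.degree, ← Fin.sum_univ_two (f := fun i => d i)]
  exact Finset.sum_subset (Finset.subset_univ _)
    (fun i _ hi => Finsupp.notMem_support_iff.mp hi)

private lemma X_mul_pderiv_monomial (i : Fin 2) (d : Fin 2 →₀ ℕ) (c : ℝ) :
    X i * pderiv i (monomial d c) = monomial d (c * (d i : ℝ)) := by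
  rw [pderiv_monomial, X, monomial_mul, one_mul]
  rcases Nat.eq_zero_or_pos (d i) with h | h
  · simp [h]
  · congr 1
    rw [add_comm, tsub_add_cancel_of_le]
    exact Finsupp.single_le_iff.mpr h

private lemma euler_poly (n : ℕ) (g : MvPolynomial (Fin 2) ℝ) (hg : g.IsHomogeneous n) :
    X 0 * pderiv 0 g + X 1 * pderiv 1 g = C (n : ℝ) * g := by
  conv_lhs => rw [g.as_sum]
  conv_rhs => rw [g.as_sum]
  rw [map_sum (pderiv 0), map_sum (pderiv 1), Finset.mul_sum, Finset.mul_sum,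
    Finset.mul_sum, ← Finset.sum_add_distrib]
  refine Finset.sum_congr rfl fun d hd => ?_
  rw [X_mul_pderiv_monomial, X_mul_pderiv_monomial, ← map_add, C_mul_monomial]
  have hdeg : d.degree = n := by
    by_contra h
    exact mem_support_iff.mp hd (hg.coeff_eq_zero h)
  rw [degree_fin2] at hdeg
  congr 1
  have : ((d 0 : ℝ)) + (d 1 : ℝ) = (n : ℝ) := by
    exact_mod_cast congrArg (Nat.cast (R := ℝ)) hdeg
  linear_combination (coeff d g) * this

private lemma eval_scale (n : ℕ) (g : MvPolynomial (Fin 2) ℝ) (hg : g.IsHomogeneous n)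
    (r x y : ℝ) : eval ![r * x, r * y] g = r ^ n * eval ![x, y] g := by
  rw [eval_eq', eval_eq', Finset.mul_sum]
  refine Finset.sum_congr rfl fun d hd => ?_
  have hdeg : d.degree = n := by
    by_contra h
    exact mem_support_iff.mp hd (hg.coeff_eq_zero h)
  rw [degree_fin2] at hdeg
  rw [Fin.prod_univ_two, Fin.prod_univ_two]
  simp only [Matrix.cons_val_zero, Matrix.cons_val_one, Matrix.head_cons]
  rw [mul_pow, mul_pow, ← hdeg, pow_add]
  ring

private lemma contDiff_eval_circle (Q : MvPolynomial (Fin 2) ℝ) :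
    ContDiff ℝ (⊤ : ℕ∞) fun φ : ℝ => eval ![Real.cos φ, Real.sin φ] Q := by
  induction Q using MvPolynomial.induction_on with
  | C c => simpa using contDiff_const
  | add f g hf hg => simp only [map_add]; exact hf.add hg
  | mul_X f i hf =>
      simp only [map_mul, eval_X]
      refine hf.mul ?_
      fin_cases i
      · simpa using Real.contDiff_cos
      · simpa using Real.contDiff_sin

private lemma analyticAt_rsin (x : ℝ) : AnalyticAt ℝ Real.sin x := by
  have h : Real.sin = fun y : ℝ => (Complex.sin y).re := by
    funext y; rw [← Complex.ofReal_sin, Complex.ofReal_re]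
  rw [h]
  exact (Complex.reCLM.analyticAt _).comp
    (((Complex.differentiable_sin.analyticAt _).restrictScalars).comp
      (Complex.ofRealCLM.analyticAt x))

private noncomputable def sinc : ℝ → ℝ := dslope Real.sin 0

private lemma analyticAt_sinc (x : ℝ) : AnalyticAt ℝ _root_.sinc x := by
  rcases eq_or_ne x 0 with rfl | hx
  · obtain ⟨pS, hpS⟩ := analyticAt_rsin 0
    exact ⟨pS.fslope, hpS.has_fpower_series_dslope_fslope⟩
  · have h1 : AnalyticAt ℝ (fun y : ℝ => (y - 0)⁻¹ • (Real.sin y - Real.sin 0)) x :=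
      (((analyticAt_id).sub analyticAt_const).inv (by simpa using hx)).mul
        ((analyticAt_rsin x).sub analyticAt_const)
    refine h1.congr ?_
    have hev : ∀ᶠ y in nhds x, y ≠ 0 := eventually_ne_nhds hx
    filter_upwards [hev] with y hy
    rw [_root_.sinc, dslope_of_ne _ hy, slope_def_field]
    simp [div_eq_inv_mul]

private lemma contDiff_sinc : ContDiff ℝ (⊤ : ℕ∞) _root_.sinc :=
  contDiff_iff_contDiffAt.mpr fun x => (analyticAt_sinc x).contDiffAt

private lemma sinc_zero : _root_.sinc 0 = 1 := by
  rw [_root_.sinc, dslope_same, Real.deriv_sin, Real.cos_zero]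

private lemma sin_eq_sinc (φ : ℝ) : Real.sin φ = φ * _root_.sinc φ := by
  rcases eq_or_ne φ 0 with rfl | hφ
  · simp
  · rw [_root_.sinc, dslope_of_ne _ hφ, slope_def_field]
    field_simp
    rw [Real.sin_zero]; ring

private lemma single_fin2_at_one (m : ℕ) : (Finsupp.single (0 : Fin 2) m) 1 = 0 :=
  Finsupp.single_eq_of_ne (by decide)

private lemma eval_one_zero_ne (p a : ℕ) (g R : MvPolynomial (Fin 2) ℝ)
    (hg : g.IsHomogeneous (p + 1)) (hfac : g = X 1 ^ a * R) (hR : ¬ X 1 ∣ R) :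
    eval ![(1 : ℝ), 0] R ≠ 0 := by
  have hcoeff : ∀ d : Fin 2 →₀ ℕ, coeff (Finsupp.single 1 a + d) g = coeff d R := by
    intro d
    rw [hfac, X_pow_eq_monomial, coeff_monomial_mul, one_mul]
  have key0 : ∀ d : Fin 2 →₀ ℕ, d 1 = 0 → d ≠ Finsupp.single 0 (p + 1 - a) →
      coeff d R = 0 := by
    intro d h1 hne
    by_contra h
    rw [← hcoeff d] at h
    have hdeg : (Finsupp.single 1 a + d).degree = p + 1 := by
      by_contra hdd; exact h (hg.coeff_eq_zero hdd)
    rw [degree_fin2] at hdeg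
    rw [Finsupp.add_apply, Finsupp.add_apply, Finsupp.single_eq_same,
      Finsupp.single_eq_of_ne (by decide), h1] at hdeg
    apply hne
    ext i
    fin_cases i
    · show d 0 = (Finsupp.single (0 : Fin 2) (p + 1 - a)) 0
      rw [Finsupp.single_eq_same]; omega
    · show d 1 = (Finsupp.single (0 : Fin 2) (p + 1 - a)) 1
      rw [single_fin2_at_one, h1]
  have hex : ∃ d : Fin 2 →₀ ℕ, d 1 = 0 ∧ coeff d R ≠ 0 := by
    by_contra hcon
    push_neg at hcon
    apply hR
    rw [R.as_sum]
    refine Finset.dvd_sum fun d hd => ?_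
    have hd1 : d 1 ≠ 0 := fun h0 => mem_support_iff.mp hd (hcon d h0)
    rw [X]
    exact monomial_dvd_monomial.mpr
      ⟨Or.inr (Finsupp.single_le_iff.mpr (Nat.one_le_iff_ne_zero.mpr hd1)), one_dvd _⟩
  obtain ⟨d, hd1, hdne⟩ := hex
  have hc : coeff (Finsupp.single 0 (p + 1 - a)) R ≠ 0 := by
    have hdeq : d = Finsupp.single 0 (p + 1 - a) := by
      by_contra hne; exact hdne (key0 d hd1 hne)
    exact hdeq ▸ hdne
  have hsum : (∑ d ∈ R.support, coeff d R * ∏ i, (![(1:ℝ), 0]) i ^ d i)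
      = coeff (Finsupp.single 0 (p + 1 - a)) R := by
    rw [Finset.sum_eq_single (Finsupp.single 0 (p + 1 - a))]
    · rw [Fin.prod_univ_two]
      simp only [Matrix.cons_val_zero, Matrix.cons_val_one, Matrix.head_cons, one_pow,
        single_fin2_at_one, pow_zero, mul_one]
    · intro d' hd' hne'
      rw [Fin.prod_univ_two]
      simp only [Matrix.cons_val_zero, Matrix.cons_val_one, Matrix.head_cons, one_pow]
      rcases eq_or_ne (d' 1) 0 with h1 | h1
      · rw [key0 d' h1 hne']; ring
      · rw [zero_pow h1]; ring
    · intro h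
      exact absurd (mem_support_iff.mpr hc) h
  rw [eval_eq', hsum]
  exact hc

/-- Let `g ∈ ℝ[x,y]` be a nonzero homogeneous polynomial of degree `p+1`
(`p ≥ 1`), `η : ℝ² → ℝ\{0}` smooth, and `G = η·(−∂g/∂y, ∂g/∂x)`.  Write `g = y^a · R`
with `y ∤ R`, and let `P(φ,ρ) = (ρ cos φ, ρ sin φ)`.  Then:
(i) for `ρ ≠ 0` the first polar component
`(−G₁(P)·sin φ + G₂(P)·cos φ)/ρ` equals `(p+1)·η(P)·g(P)/ρ²`, and
(ii) there is a smooth `γ₁ : ℝ → ℝ` with `γ₁(0) ≠ 0` and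
`g(ρ cos φ, ρ sin φ) = ρ^{p+1}·φ^a·γ₁(φ)`, so the quantity from (i) equals
`(p+1)·η(P)·ρ^{p−1}·φ^a·γ₁(φ)`. -/
theorem polar_first_component_of_hamiltonian
    (p : ℕ) (hp : 1 ≤ p)
    (g R : MvPolynomial (Fin 2) ℝ) (hne : g ≠ 0) (hg : g.IsHomogeneous (p + 1))
    (a : ℕ) (hfac : g = X 1 ^ a * R) (hR : ¬ (X 1 ∣ R))
    (η : ℝ × ℝ → ℝ) (hη : ContDiff ℝ (⊤ : ℕ∞) η) (hη0 : ∀ z, η z ≠ 0)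
    (G₁ G₂ : ℝ × ℝ → ℝ)
    (hG₁ : ∀ z : ℝ × ℝ, G₁ z = η z * (-(eval ![z.1, z.2] (pderiv 1 g))))
    (hG₂ : ∀ z : ℝ × ℝ, G₂ z = η z * eval ![z.1, z.2] (pderiv 0 g))
    (P : ℝ → ℝ → ℝ × ℝ)
    (hP : ∀ φ ρ : ℝ, P φ ρ = (ρ * Real.cos φ, ρ * Real.sin φ)) :
    (∀ φ ρ : ℝ, ρ ≠ 0 →
      (-(G₁ (P φ ρ)) * Real.sin φ + G₂ (P φ ρ) * Real.cos φ) / ρ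
        = (p + 1 : ℝ) * η (P φ ρ) * eval ![ρ * Real.cos φ, ρ * Real.sin φ] g / ρ ^ 2) ∧
    ∃ γ₁ : ℝ → ℝ, ContDiff ℝ (⊤ : ℕ∞) γ₁ ∧ γ₁ 0 ≠ 0 ∧
      (∀ φ ρ : ℝ,
        eval ![ρ * Real.cos φ, ρ * Real.sin φ] g = ρ ^ (p + 1) * φ ^ a * γ₁ φ) ∧
      (∀ φ ρ : ℝ, ρ ≠ 0 →
        (-(G₁ (P φ ρ)) * Real.sin φ + G₂ (P φ ρ) * Real.cos φ) / ρ
          = (p + 1 : ℝ) * η (P φ ρ) * ρ ^ (p - 1) * φ ^ a * γ₁ φ) := by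
  have euler_eval : ∀ x y : ℝ,
      x * eval ![x, y] (pderiv 0 g) + y * eval ![x, y] (pderiv 1 g)
        = ((p : ℝ) + 1) * eval ![x, y] g := by
    intro x y
    have h := congrArg (eval ![x, y]) (euler_poly (p + 1) g hg)
    simp only [map_add, map_mul, eval_X, eval_C, Matrix.cons_val_zero, Matrix.cons_val_one,
      Matrix.head_cons, Nat.cast_add, Nat.cast_one] at h
    exact h
  have part1 : ∀ φ ρ : ℝ, ρ ≠ 0 →
      (-(G₁ (P φ ρ)) * Real.sin φ + G₂ (P φ ρ) * Real.cos φ) / ρ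
        = (p + 1 : ℝ) * η (P φ ρ) * eval ![ρ * Real.cos φ, ρ * Real.sin φ] g / ρ ^ 2 := by
    intro φ ρ hρ
    rw [hP, hG₁, hG₂]
    have key := euler_eval (ρ * Real.cos φ) (ρ * Real.sin φ)
    set E := eval ![ρ * Real.cos φ, ρ * Real.sin φ] g with hE
    set e0 := eval ![ρ * Real.cos φ, ρ * Real.sin φ] (pderiv 0 g) with he0
    set e1 := eval ![ρ * Real.cos φ, ρ * Real.sin φ] (pderiv 1 g) with he1
    rw [div_eq_div_iff hρ (pow_ne_zero 2 hρ)]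
    linear_combination (η (ρ * Real.cos φ, ρ * Real.sin φ)) * ρ * key
  have hvals : ∀ φ ρ : ℝ, eval ![ρ * Real.cos φ, ρ * Real.sin φ] g
      = ρ ^ (p + 1) * φ ^ a *
        (_root_.sinc φ ^ a * eval ![Real.cos φ, Real.sin φ] R) := by
    intro φ ρ
    rw [eval_scale (p + 1) g hg]
    conv_lhs => rw [hfac]
    rw [map_mul, map_pow, eval_X]
    simp only [Matrix.cons_val_one, Matrix.head_cons, Matrix.cons_val_zero]
    rw [sin_eq_sinc φ]
    ring
  refine ⟨part1, fun φ => _root_.sinc φ ^ a * eval ![Real.cos φ, Real.sin φ] R,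
    (contDiff_sinc.pow a).mul (contDiff_eval_circle R), ?_, hvals, ?_⟩
  · simp only [_root_.sinc_zero, one_pow, Real.cos_zero, Real.sin_zero, one_mul]
    exact eval_one_zero_ne p a g R hg hfac hR
  · intro φ ρ hρ
    rw [part1 φ ρ hρ, hvals φ ρ]
    have hpow : ρ ^ (p + 1) = ρ ^ (p - 1) * ρ ^ 2 := by
      rw [← pow_add]; congr 1; omega
    rw [hpow]
    field_simp
end

section
/- Let k ≥ 1 be an integer and define P_k : ℝ² → ℝ² by P_k(φ,ρ) = (ρ^k cos φ, ρ^k sin φ). If α : ℝ² → ℝ is a smooth function that is flat at the origin (0,0), then the smooth function α ∘ P_k satisfies (α ∘ P_k)(φ + 2π, ρ) = (α ∘ P_k)(φ, ρ) for all (φ,ρ), and α ∘ P_k is flat at every point (φ,0) of the line {ρ = 0}. -/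
open Real

/-- Auxiliary: the Taylor composition of the zero series with anything is zero. -/
lemma taylorComp_zero_left {E F G : Type*} [NormedAddCommGroup E] [NormedSpace ℝ E]
    [NormedAddCommGroup F] [NormedSpace ℝ F] [NormedAddCommGroup G] [NormedSpace ℝ G]
    (q : FormalMultilinearSeries ℝ F G) (p : FormalMultilinearSeries ℝ E F)
    (hq : ∀ m, q m = 0) (n : ℕ) : q.taylorComp p n = 0 := by
  rw [FormalMultilinearSeries.taylorComp]
  apply Finset.sum_eq_zero
  intro c _
  ext v
  simp [FormalMultilinearSeries.compAlongOrderedFinpartition_apply, hq]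

/-- Let `k ≥ 1` and `P_k(φ,ρ) = (ρ^k cos φ, ρ^k sin φ)`.  If
`α : ℝ² → ℝ` is smooth and flat at the origin, then `α ∘ P_k` is `2π`-periodic in `φ`
and flat at every point of the line `{ρ = 0}`. -/
theorem comp_polar_of_flat_is_flat
    (k : ℕ) (hk : 1 ≤ k)
    (Pk : ℝ × ℝ → ℝ × ℝ)
    (hPk : ∀ φ ρ : ℝ, Pk (φ, ρ) = (ρ ^ k * Real.cos φ, ρ ^ k * Real.sin φ))
    (α : ℝ × ℝ → ℝ) (hα : ContDiff ℝ (⊤ : ℕ∞) α)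
    (hflat : ∀ n : ℕ, iteratedFDeriv ℝ n α ((0 : ℝ), (0 : ℝ)) = 0) :
    (∀ φ ρ : ℝ, (α ∘ Pk) (φ + 2 * π, ρ) = (α ∘ Pk) (φ, ρ)) ∧
    (∀ n : ℕ, ∀ φ : ℝ, iteratedFDeriv ℝ n (α ∘ Pk) (φ, (0 : ℝ)) = 0) := by
  constructor
  · intro φ ρ
    simp only [Function.comp_apply, hPk, Real.cos_add_two_pi, Real.sin_add_two_pi]
  · -- flatness on the line {ρ = 0}
    have hPk' : Pk = fun p : ℝ × ℝ => (p.2 ^ k * Real.cos p.1, p.2 ^ k * Real.sin p.1) :=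
      funext fun p => hPk p.1 p.2
    have hPksmooth : ContDiff ℝ (⊤ : ℕ∞) Pk := by
      rw [hPk']
      exact ContDiff.prodMk ((contDiff_snd.pow k).mul (Real.contDiff_cos.comp contDiff_fst))
        ((contDiff_snd.pow k).mul (Real.contDiff_sin.comp contDiff_fst))
    set q := ftaylorSeriesWithin ℝ α Set.univ with hq
    set p := ftaylorSeriesWithin ℝ Pk Set.univ with hp
    have hqT : HasFTaylorSeriesUpToOn (⊤ : WithTop ℕ∞) α q Set.univ :=
      (hasFTaylorSeriesUpToOn_top_iff le_top).2 ((hasFTaylorSeriesUpToOn_top_iff le_rfl).1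
        (hα.contDiffOn.ftaylorSeriesWithin uniqueDiffOn_univ))
    have hpT : HasFTaylorSeriesUpToOn (⊤ : WithTop ℕ∞) Pk p Set.univ :=
      (hasFTaylorSeriesUpToOn_top_iff le_top).2 ((hasFTaylorSeriesUpToOn_top_iff le_rfl).1
        (hPksmooth.contDiffOn.ftaylorSeriesWithin uniqueDiffOn_univ))
    have hcomp : HasFTaylorSeriesUpToOn (⊤ : WithTop ℕ∞) (α ∘ Pk)
        (fun x => (q (Pk x)).taylorComp (p x)) Set.univ :=
      hqT.comp hpT (Set.mapsTo_univ _ _)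
    intro n φ
    have hx0 : Pk (φ, (0 : ℝ)) = ((0 : ℝ), (0 : ℝ)) := by
      rw [hPk]
      simp [zero_pow (by omega : k ≠ 0)]
    have heq : iteratedFDeriv ℝ n (α ∘ Pk) (φ, (0 : ℝ)) =
        (q (Pk (φ, (0 : ℝ)))).taylorComp (p (φ, (0 : ℝ))) n := by
      rw [← iteratedFDerivWithin_univ]
      exact (hcomp.eq_iteratedFDerivWithin_of_uniqueDiffOn (by exact_mod_cast le_top)
        uniqueDiffOn_univ (Set.mem_univ _)).symm ▸ rfl
    rw [heq]
    apply taylorComp_zero_left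
    intro m
    rw [hx0, hq, ftaylorSeriesWithin_univ]
    exact hflat m
end

section
/- Let n ≥ 1 and let K ⊂ ℝⁿ be a compact convex set with the property that (0, x₂, …, xₙ) ∈ K whenever (x₁, x₂, …, xₙ) ∈ K. Let r ≥ 0 be an integer. Then there exists a constant C > 0, depending only on K, n and r, such that for every smooth function α : ℝⁿ → ℝ, ‖α‖_K^r ≤ C · ‖Z(α)‖_K^{r+1}, where Z(α)(x₁, …, xₙ) = x₁ · α(x₁, …, xₙ). In particular, the linear map α ↦ Z(α) on smooth functions is injective. -/
open scoped ContDiff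

namespace MulFirstCoord

variable {n : ℕ}

local notation "V" => (Fin n → ℝ)

/-- Directional derivative operator. -/
noncomputable def Dv (v : V) (f : V → ℝ) : V → ℝ := fun x => fderiv ℝ f x v

/-- Iterated directional derivatives along a word (head is outermost). -/
noncomputable def Dword : List V → (V → ℝ) → (V → ℝ)
  | [], f => f
  | v :: L, f => Dv v (Dword L f)

theorem natCast_lt_infty (j : ℕ) : (j : WithTop ℕ∞) < ∞ := by
  rw [show ((j : WithTop ℕ∞)) = (((j : ℕ∞)) : WithTop ℕ∞) from rfl]
  exact WithTop.coe_lt_coe.2 (WithTop.coe_lt_top j)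

theorem natCast_le_infty (j : ℕ) : (j : WithTop ℕ∞) ≤ ∞ :=
  (natCast_lt_infty j).le

theorem Dv_contDiff {f : V → ℝ} (v : V) (hf : ContDiff ℝ ∞ f) :
    ContDiff ℝ ∞ (Dv v f) :=
  (ContinuousLinearMap.apply ℝ ℝ v).contDiff.comp (hf.fderiv_right (by norm_num))

theorem Dword_contDiff {f : V → ℝ} (L : List V) (hf : ContDiff ℝ ∞ f) :
    ContDiff ℝ ∞ (Dword L f) := by
  induction L with
  | nil => exact hf
  | cons v L ih => exact Dv_contDiff v ih

theorem Dword_append (A B : List V) (f : V → ℝ) :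
    Dword (A ++ B) f = Dword A (Dword B f) := by
  induction A with
  | nil => rfl
  | cons v A ih => simp [Dword, ih]

theorem iteratedFDeriv_eq_dword {f : V → ℝ} (hf : ContDiff ℝ ∞ f) :
    ∀ (j : ℕ) (x : V) (m : Fin j → V),
      iteratedFDeriv ℝ j f x m = Dword (List.ofFn m) f x := by
  intro j
  induction j with
  | zero => intro x m; simp [Dword]
  | succ j ih =>
    intro x m
    rw [iteratedFDeriv_succ_apply_left, List.ofFn_succ]
    have hdiff : DifferentiableAt ℝ (iteratedFDeriv ℝ j f) x :=
      (hf.differentiable_iteratedFDeriv (natCast_lt_infty j) x)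
    have h1 : (fderiv ℝ (iteratedFDeriv ℝ j f) x (m 0)) (Fin.tail m)
        = fderiv ℝ (fun y => iteratedFDeriv ℝ j f y (Fin.tail m)) x (m 0) := by
      rw [fderiv_continuousMultilinear_apply_const_apply hdiff]
    rw [h1]
    have h2 : (fun y => iteratedFDeriv ℝ j f y (Fin.tail m))
        = Dword (List.ofFn (Fin.tail m)) f := by
      funext y; exact ih y (Fin.tail m)
    rw [h2]
    rfl

theorem abs_dword_le {f : V → ℝ} (hf : ContDiff ℝ ∞ f) (L : List V) (x : V) :
    |Dword L f x| ≤ ‖iteratedFDeriv ℝ L.length f x‖ * (L.map norm).prod := by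
  have h := iteratedFDeriv_eq_dword hf L.length x L.get
  rw [List.ofFn_get] at h
  rw [← h]
  calc |iteratedFDeriv ℝ L.length f x L.get|
      ≤ ‖iteratedFDeriv ℝ L.length f x‖ * ∏ i, ‖L.get i‖ :=
        (iteratedFDeriv ℝ L.length f x).le_opNorm L.get
    _ = _ := by
        congr 1
        conv_rhs => rw [← List.ofFn_get L]
        rw [List.map_ofFn, List.prod_ofFn]
        rfl

theorem dword_map_norm_prod_nonneg (L : List V) : 0 ≤ (L.map norm).prod := by
  induction L with
  | nil => simp
  | cons v L ih => simpa using mul_nonneg (norm_nonneg v) ih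

theorem two_le_infty : (2 : WithTop ℕ∞) ≤ ∞ := by
  rw [show (2 : WithTop ℕ∞) = ((2 : ℕ∞) : WithTop ℕ∞) from rfl]
  exact WithTop.coe_le_coe.2 le_top

theorem dv_comm {f : V → ℝ} (hf : ContDiff ℝ ∞ f) (u v : V) :
    Dv u (Dv v f) = Dv v (Dv u f) := by
  have hdf : Differentiable ℝ (fderiv ℝ f) :=
    (hf.fderiv_right (m := ∞) (by norm_num)).differentiable (by norm_num)
  have key : ∀ (a b : V) (x : V), Dv a (Dv b f) x = fderiv ℝ (fderiv ℝ f) x a b := by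
    intro a b x
    show fderiv ℝ (fun y => fderiv ℝ f y b) x a = _
    have h : HasFDerivAt (fun y => (ContinuousLinearMap.apply ℝ ℝ b) (fderiv ℝ f y))
        ((ContinuousLinearMap.apply ℝ ℝ b).comp (fderiv ℝ (fderiv ℝ f) x)) x :=
      ((ContinuousLinearMap.apply ℝ ℝ b).hasFDerivAt).comp x (hdf x).hasFDerivAt
    rw [show (fun y => fderiv ℝ f y b) = (fun y => (ContinuousLinearMap.apply ℝ ℝ b) (fderiv ℝ f y)) from rfl,
      h.fderiv]
    simp
  funext x
  rw [key u v x, key v u x]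
  exact (hf.contDiffAt.isSymmSndFDerivAt (by rw [minSmoothness_of_isRCLikeNormedField]; exact two_le_infty)).eq u v

theorem dword_perm {f : V → ℝ} (hf : ContDiff ℝ ∞ f) {L L' : List V} (h : L.Perm L') :
    Dword L f = Dword L' f := by
  induction h with
  | nil => rfl
  | cons v _ ih => show Dv v _ = Dv v _; rw [ih]
  | swap u v L => exact dv_comm (Dword_contDiff L hf) v u
  | trans _ _ ih1 ih2 => rw [ih1, ih2]


/-- multiplication by the first coordinate -/
noncomputable def Z (i0 : Fin n) (f : V → ℝ) : V → ℝ := fun x => x i0 * f x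

theorem Z_contDiff (i0 : Fin n) {f : V → ℝ} (hf : ContDiff ℝ ∞ f) : ContDiff ℝ ∞ (Z i0 f) :=
  ((ContinuousLinearMap.proj i0 : V →L[ℝ] ℝ).contDiff).mul hf

theorem dv_Z (i0 : Fin n) {h : V → ℝ} (hh : ContDiff ℝ ∞ h) (v : V) :
    Dv v (Z i0 h) = fun x => v i0 * h x + x i0 * Dv v h x := by
  funext x
  show fderiv ℝ (fun y => y i0 * h y) x v = _
  have hc : DifferentiableAt ℝ (fun y : V => y i0) x :=
    (ContinuousLinearMap.proj i0 : V →L[ℝ] ℝ).differentiableAt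
  have hd : DifferentiableAt ℝ h x := (hh.differentiable (by norm_num)).differentiableAt
  rw [fderiv_fun_mul hc hd]
  have hproj : fderiv ℝ (fun y : V => y i0) x = (ContinuousLinearMap.proj i0 : V →L[ℝ] ℝ) :=
    (ContinuousLinearMap.proj i0 : V →L[ℝ] ℝ).fderiv
  simp only [ContinuousLinearMap.add_apply, ContinuousLinearMap.smul_apply, hproj,
    ContinuousLinearMap.proj_apply, smul_eq_mul]
  show x i0 * fderiv ℝ h x v + h x * v i0 = v i0 * h x + x i0 * Dv v h x
  unfold Dv; ring

theorem dword_Z (i0 : Fin n) {α : V → ℝ} (hα : ContDiff ℝ ∞ α) (w : List V) (hw : ∀ v ∈ w, v i0 = 0) :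
    Dword w (Z i0 α) = Z i0 (Dword w α) := by
  induction w with
  | nil => rfl
  | cons v w ih =>
    have hw' : ∀ u ∈ w, u i0 = 0 := fun u hu => hw u (List.mem_cons_of_mem v hu)
    show Dv v (Dword w (Z i0 α)) = _
    rw [ih hw', dv_Z i0 (Dword_contDiff w hα) v, hw v List.mem_cons_self]
    funext x
    simp [Z, Dword]

theorem replicate_Z (i0 : Fin n) (e : V) (he : e i0 = 1) {β : V → ℝ} (hβ : ContDiff ℝ ∞ β) (p : ℕ) :
    Dword (List.replicate (p+1) e) (Z i0 β) = fun y =>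
      y i0 * Dword (List.replicate (p+1) e) β y
        + ((p : ℝ) + 1) * Dword (List.replicate p e) β y := by
  induction p with
  | zero =>
    show Dv e (Z i0 β) = _
    rw [dv_Z i0 hβ e, he]
    funext y
    simp only [List.replicate_one, List.replicate_zero, Dword, Nat.cast_zero]
    rw [show Dword (List.replicate 1 e) β = Dv e β from rfl]
    ring
  | succ p ih =>
    set u := Dword (List.replicate (p+1) e) β with hu
    set P := Dword (List.replicate p e) β with hP
    have hucd : ContDiff ℝ ∞ u := Dword_contDiff _ hβ
    have hPcd : ContDiff ℝ ∞ P := Dword_contDiff _ hβ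
    have step : Dword (List.replicate (p+2) e) (Z i0 β)
        = Dv e (Dword (List.replicate (p+1) e) (Z i0 β)) := rfl
    rw [step, ih]
    funext x
    have hA : DifferentiableAt ℝ (fun y => y i0 * u y) x :=
      ((Z_contDiff i0 hucd).differentiable (by norm_num)).differentiableAt
    have hB : DifferentiableAt ℝ (fun y => ((p : ℝ) + 1) * P y) x :=
      (((hPcd.differentiable (by norm_num)).differentiableAt).const_mul _)
    show fderiv ℝ (fun y => y i0 * u y + ((p : ℝ) + 1) * P y) x e = _
    rw [fderiv_fun_add hA hB]
    have h1 : fderiv ℝ (fun y => y i0 * u y) x e = u x + x i0 * Dv e u x := by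
      have := congrFun (dv_Z i0 hucd e) x
      unfold Dv at this ⊢
      rw [show (fun y => y i0 * u y) = Z i0 u from rfl, this, he]; ring
    have h2 : fderiv ℝ (fun y => ((p : ℝ) + 1) * P y) x e
        = ((p : ℝ) + 1) * Dv e P x := by
      rw [fderiv_const_mul ((hPcd.differentiable (by norm_num)).differentiableAt)]
      rfl
    have h3 : Dv e P = u := rfl
    rw [ContinuousLinearMap.add_apply, h1, h2, h3]
    have h4 : Dword (List.replicate (p+1+1) e) β = Dv e u := rfl
    rw [h4]
    push_cast
    ring

theorem hadamard (i0 : Fin n) (e : V) (he : e i0 = 1) {K : Set V} (hKv : Convex ℝ K) {β : V → ℝ} (hβ : ContDiff ℝ ∞ β)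
    {x : V} (hx : x ∈ K) (hx0 : x + (-1 : ℝ) • (x i0 • e) ∈ K)
    (hxK : ∀ t ∈ Set.Icc (0:ℝ) 1, x + (t - 1) • (x i0 • e) ∈ K)
    (p : ℕ) {B : ℝ} (hB0 : 0 ≤ B)
    (hB : ∀ y ∈ K, |Dword (List.replicate (p+1) e) (Z i0 β) y| ≤ B) :
    |Dword (List.replicate p e) β x| ≤ B := by
  classical
  set γ : ℝ → V := fun t => x + (t - 1) • (x i0 • e) with hγ
  set P := Dword (List.replicate p e) β with hP
  set u := Dword (List.replicate (p+1) e) β with hu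
  set Q := Dword (List.replicate (p+1) e) (Z i0 β) with hQ
  have hPcd : ContDiff ℝ ∞ P := Dword_contDiff _ hβ
  have hγi0 : ∀ t, γ t i0 = t * x i0 := by
    intro t
    simp only [hγ, Pi.add_apply, Pi.smul_apply, smul_eq_mul, he]
    ring
  have hγ1 : γ 1 = x := by simp [hγ]
  have hder : ∀ t : ℝ, HasDerivAt (fun s => s^(p+1) * P (γ s)) (t^p * Q (γ t)) t := by
    intro t
    have hγ' : HasDerivAt γ (x i0 • e) t := by
      simpa [hγ] using (((hasDerivAt_id t).sub_const 1).smul_const (x i0 • e)).const_add x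
    have hPγ : HasDerivAt (fun s => P (γ s)) (fderiv ℝ P (γ t) (x i0 • e)) t :=
      ((hPcd.differentiable (by norm_num)) (γ t)).hasFDerivAt.comp_hasDerivAt t hγ'
    have := (hasDerivAt_pow (p+1) t).mul hPγ
    have hval : fderiv ℝ P (γ t) (x i0 • e) = x i0 * Dv e P (γ t) := by
      rw [map_smul, smul_eq_mul]; rfl
    have hQval : Q (γ t) = γ t i0 * u (γ t) + ((p : ℝ) + 1) * P (γ t) := by
      rw [hQ, replicate_Z i0 e he hβ p]
    have hDveP : Dv e P (γ t) = u (γ t) := rfl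
    have heq : (↑(p + 1) : ℝ) * t ^ (p + 1 - 1) * P (γ t)
        + t ^ (p + 1) * (fderiv ℝ P (γ t)) (x i0 • e) = t ^ p * Q (γ t) := by
      rw [hval, hDveP, hQval, hγi0 t]
      push_cast
      ring
    rw [heq] at this
    exact this
  have mvt := Convex.norm_image_sub_le_of_norm_hasDerivWithin_le
    (f := fun s => s^(p+1) * P (γ s)) (f' := fun t => t^p * Q (γ t)) (s := Set.Icc (0:ℝ) 1)
    (C := B) (fun t _ => (hder t).hasDerivWithinAt)
    (fun t ht => by
      rw [Real.norm_eq_abs, abs_mul, abs_pow]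
      have h1 : |t| ≤ 1 := abs_le.2 ⟨by linarith [ht.1], ht.2⟩
      have h2 : |t|^p ≤ 1 := pow_le_one₀ (abs_nonneg t) h1
      have h3 : |Q (γ t)| ≤ B := hB _ (hxK t ht)
      calc |t|^p * |Q (γ t)| ≤ 1 * B :=
            mul_le_mul h2 h3 (abs_nonneg _) zero_le_one
        _ = B := one_mul B)
    (convex_Icc 0 1) (Set.left_mem_Icc.2 zero_le_one) (Set.right_mem_Icc.2 zero_le_one)
  simp only [one_pow, hγ1, zero_pow (Nat.succ_ne_zero p), zero_mul, sub_zero, one_mul,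
    Real.norm_eq_abs] at mvt
  calc |P x| ≤ B * |(1:ℝ)| := by simpa using mvt
    _ = B := by norm_num



theorem word_bound (i0 : Fin n) {K : Set V} (hKv : Convex ℝ K)
    (hK0 : ∀ x ∈ K, Function.update x i0 (0:ℝ) ∈ K)
    {α : V → ℝ} (hα : ContDiff ℝ ∞ α) {x : V} (hx : x ∈ K) (L : List V)
    (hL : ∀ v ∈ L, v = Pi.single i0 (1:ℝ) ∨ v i0 = 0) {S : ℝ} (hS0 : 0 ≤ S)
    (hS : ∀ y ∈ K, ‖iteratedFDeriv ℝ (L.length + 1) (Z i0 α) y‖ ≤ S) :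
    |Dword L α x| ≤ S * (L.map norm).prod := by
  classical
  set e : V := Pi.single i0 (1:ℝ) with hedef
  have he : e i0 = 1 := by rw [hedef]; simp
  have hnorme : ‖e‖ = 1 := by rw [hedef, Pi.norm_single]; exact norm_one
  set g := Z i0 α with hg
  set p := L.count e with hp
  set w := L.filter (fun v => !decide (v = e)) with hw
  have hperm : (List.replicate p e ++ w).Perm L := by
    have h := List.filter_append_perm (fun v => decide (v = e)) L
    rwa [List.filter_eq] at h
  have hlen : p + w.length = L.length := by
    have := hperm.length_eq
    simpa using this
  have hwi0 : ∀ v ∈ w, v i0 = 0 := by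
    intro v hv
    rw [hw, List.mem_filter] at hv
    rcases hL v hv.1 with h | h
    · exfalso; have := hv.2; simp [h] at this
    · exact h
  set β := Dword w α with hβdef
  have hβ : ContDiff ℝ ∞ β := Dword_contDiff w hα
  have hZβ : Z i0 β = Dword w g := (dword_Z i0 hα w hwi0).symm
  -- membership facts for the segment
  have hseg : ∀ t : ℝ, x + (t - 1) • (x i0 • e) = t • x + (1 - t) • (Function.update x i0 (0:ℝ)) := by
    intro t
    funext k
    by_cases hk : k = i0
    · subst hk
      simp only [Pi.add_apply, Pi.smul_apply, smul_eq_mul, he, Function.update_self]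
      ring
    · simp only [Pi.add_apply, Pi.smul_apply, smul_eq_mul, hedef,
        Pi.single_eq_of_ne hk, Function.update_of_ne hk]
      ring
  have hupd : Function.update x i0 (0:ℝ) ∈ K := hK0 x hx
  have hx0 : x + (-1 : ℝ) • (x i0 • e) ∈ K := by
    have := hseg 0
    rw [show (0:ℝ) - 1 = -1 by norm_num] at this
    rw [this]
    simpa using hupd
  have hxK : ∀ t ∈ Set.Icc (0:ℝ) 1, x + (t - 1) • (x i0 • e) ∈ K := by
    intro t ht
    rw [hseg t]
    exact hKv hx hupd ht.1 (by linarith [ht.2]) (by ring)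
  -- the prod over w equals the prod over L
  have hprod : (w.map norm).prod = (L.map norm).prod := by
    have h1 := (hperm.map norm).prod_eq
    rw [← h1]
    simp [List.prod_replicate, hnorme]
  -- rewrite the word
  have hre : Dword L α x = Dword (List.replicate p e) β x := by
    rw [← dword_perm hα hperm, Dword_append]
  rw [hre, ← hprod]
  -- apply hadamard
  refine hadamard i0 e he hKv hβ hx hx0 hxK p
    (mul_nonneg hS0 (dword_map_norm_prod_nonneg w)) ?_
  intro y hy
  rw [hZβ, ← Dword_append]
  have hb := abs_dword_le (Z_contDiff i0 hα) (List.replicate (p+1) e ++ w) y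
  have hlen2 : (List.replicate (p+1) e ++ w).length = L.length + 1 := by
    simp only [List.length_append, List.length_replicate]
    omega
  rw [hlen2] at hb
  have hprod2 : ((List.replicate (p+1) e ++ w).map norm).prod = (w.map norm).prod := by
    simp [List.prod_replicate, hnorme]
  rw [hprod2] at hb
  exact hb.trans (mul_le_mul_of_nonneg_right (hS y hy) (dword_map_norm_prod_nonneg w))

theorem pointwise_bound (i0 : Fin n) {K : Set V} (hKv : Convex ℝ K)
    (hK0 : ∀ x ∈ K, Function.update x i0 (0:ℝ) ∈ K)
    {α : V → ℝ} (hα : ContDiff ℝ ∞ α) {x : V} (hx : x ∈ K) (j : ℕ) {S : ℝ} (hS0 : 0 ≤ S)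
    (hS : ∀ y ∈ K, ‖iteratedFDeriv ℝ (j + 1) (Z i0 α) y‖ ≤ S) :
    ‖iteratedFDeriv ℝ j α x‖ ≤ 2 ^ j * S := by
  classical
  apply ContinuousMultilinearMap.opNorm_le_bound (by positivity)
  intro m
  set e : V := Pi.single i0 (1:ℝ) with hedef
  set a : Fin j → ℝ := fun k => m k i0 with ha
  set w' : Fin j → V := fun k => Function.update (m k) i0 0 with hw'
  have hm : m = (fun k => a k • e) + w' := by
    funext k
    funext l
    by_cases hl : l = i0
    · subst hl
      simp [ha, hw', hedef, Pi.single_eq_same]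
    · simp [ha, hw', hedef, Pi.single_eq_of_ne hl, Function.update_of_ne hl]
  have expand : iteratedFDeriv ℝ j α x m
      = ∑ s : Finset (Fin j),
          iteratedFDeriv ℝ j α x (s.piecewise (fun k => a k • e) w') := by
    conv_lhs => rw [hm]
    exact (iteratedFDeriv ℝ j α x).toMultilinearMap.map_add_univ _ _
  have key : ∀ s : Finset (Fin j),
      |iteratedFDeriv ℝ j α x (s.piecewise (fun k => a k • e) w')|
        ≤ S * ∏ k, ‖m k‖ := by
    intro s
    set c : Fin j → ℝ := fun k => if k ∈ s then a k else 1 with hc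
    set u : Fin j → V := fun k => if k ∈ s then e else w' k with hu
    have hpw : s.piecewise (fun k => a k • e) w' = fun k => c k • u k := by
      funext k
      by_cases hk : k ∈ s <;> simp [Finset.piecewise, hk, hc, hu]
    rw [hpw]
    have hsmul : iteratedFDeriv ℝ j α x (fun k => c k • u k)
        = (∏ k, c k) • iteratedFDeriv ℝ j α x u :=
      (iteratedFDeriv ℝ j α x).toMultilinearMap.map_smul_univ c u
    rw [hsmul, smul_eq_mul, abs_mul, Finset.abs_prod]
    -- bound |f u| via word_bound
    have hword : iteratedFDeriv ℝ j α x u = Dword (List.ofFn u) α x := by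
      exact iteratedFDeriv_eq_dword hα j x u
    have hletters : ∀ v ∈ List.ofFn u, v = Pi.single i0 (1:ℝ) ∨ v i0 = 0 := by
      intro v hv
      rcases List.mem_ofFn.1 hv with ⟨k, rfl⟩
      by_cases hk : k ∈ s
      · left; simp [hu, hk, hedef]
      · right; simp [hu, hk, hw']
    have hS' : ∀ y ∈ K, ‖iteratedFDeriv ℝ ((List.ofFn u).length + 1) (Z i0 α) y‖ ≤ S := by
      intro y hy
      rw [List.length_ofFn]
      exact hS y hy
    have hwb := word_bound i0 hKv hK0 hα hx (List.ofFn u) hletters hS0 hS'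
    rw [← hword] at hwb
    have hprodu : ((List.ofFn u).map norm).prod = ∏ k, ‖u k‖ := by
      conv_lhs => rw [List.map_ofFn]
      rw [List.prod_ofFn]
      rfl
    rw [hprodu] at hwb
    have habs : |iteratedFDeriv ℝ j α x u| = ‖iteratedFDeriv ℝ j α x u‖ :=
      (Real.norm_eq_abs _).symm
    calc (∏ k, |c k|) * |iteratedFDeriv ℝ j α x u|
        ≤ (∏ k, |c k|) * (S * ∏ k, ‖u k‖) := by
          apply mul_le_mul_of_nonneg_left _ (Finset.prod_nonneg fun k _ => abs_nonneg _)
          rw [habs]; exact hwb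
      _ = S * ∏ k, |c k| * ‖u k‖ := by
          rw [Finset.prod_mul_distrib]; ring
      _ ≤ S * ∏ k, ‖m k‖ := by
          apply mul_le_mul_of_nonneg_left _ hS0
          apply Finset.prod_le_prod (fun k _ => mul_nonneg (abs_nonneg _) (norm_nonneg _))
          intro k _
          by_cases hk : k ∈ s
          · have h1 : |c k| = |a k| := by simp [hc, hk]
            have h2 : ‖u k‖ = 1 := by
              simp [hu, hk, hedef, Pi.norm_single]
            rw [h1, h2, mul_one, ha]
            have := norm_le_pi_norm (m k) i0
            simpa [Real.norm_eq_abs] using this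
          · have h1 : |c k| = 1 := by simp [hc, hk]
            have h2 : ‖u k‖ = ‖w' k‖ := by simp [hu, hk]
            rw [h1, h2, one_mul]
            show ‖Function.update (m k) i0 0‖ ≤ ‖m k‖
            apply (pi_norm_le_iff_of_nonneg (norm_nonneg (m k))).2
            intro l
            by_cases hl : l = i0
            · subst hl; simp
            · rw [Function.update_of_ne hl]
              exact norm_le_pi_norm (m k) l
  calc ‖iteratedFDeriv ℝ j α x m‖
      = |∑ s : Finset (Fin j),
          iteratedFDeriv ℝ j α x (s.piecewise (fun k => a k • e) w')| := by
        rw [Real.norm_eq_abs, expand]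
    _ ≤ ∑ s : Finset (Fin j), |iteratedFDeriv ℝ j α x (s.piecewise (fun k => a k • e) w')| :=
        Finset.abs_sum_le_sum_abs _ _
    _ ≤ ∑ _s : Finset (Fin j), S * ∏ k, ‖m k‖ := Finset.sum_le_sum fun s _ => key s
    _ = 2 ^ j * S * ∏ k, ‖m k‖ := by
        rw [Finset.sum_const, Finset.card_univ, Fintype.card_finset, Fintype.card_fin]
        simp [nsmul_eq_mul]; ring


theorem biSup_le {K : Set V} {F : V → ℝ} {B : ℝ} (h : ∀ y ∈ K, F y ≤ B) (hB : 0 ≤ B) :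
    (⨆ y ∈ K, F y) ≤ B :=
  Real.iSup_le (fun y => Real.iSup_le (fun hy => h y hy) hB) hB

theorem biSup_nonneg {K : Set V} {F : V → ℝ} (h : ∀ y, 0 ≤ F y) : 0 ≤ ⨆ y ∈ K, F y :=
  Real.iSup_nonneg fun y => Real.iSup_nonneg fun _ => h y

theorem le_biSup {K : Set V} (F : V → ℝ) {y : V} (hy : y ∈ K)
    (hbdd : ∃ M, ∀ u ∈ K, F u ≤ M) : F y ≤ ⨆ x ∈ K, F x := by
  obtain ⟨M, hM⟩ := hbdd
  have hb : BddAbove (Set.range fun u => ⨆ _ : u ∈ K, F u) := by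
    refine ⟨max M 0, ?_⟩
    rintro r ⟨u, rfl⟩
    show (⨆ _ : u ∈ K, F u) ≤ M ⊔ 0
    by_cases hu : u ∈ K
    · rw [ciSup_pos hu]; exact le_max_of_le_left (hM u hu)
    · haveI : IsEmpty (u ∈ K) := ⟨hu⟩
      rw [Real.iSup_of_isEmpty]
      exact le_max_right M 0
  calc F y = ⨆ _ : y ∈ K, F y := (ciSup_pos (f := fun _ => F y) hy).symm
    _ ≤ ⨆ x, ⨆ _ : x ∈ K, F x := le_ciSup hb y

/-- The central estimate, sup-over-K form. -/
theorem sup_bound (i0 : Fin n) {K : Set V} (hKc : IsCompact K) (hKv : Convex ℝ K)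
    (hK0 : ∀ x ∈ K, Function.update x i0 (0:ℝ) ∈ K)
    {α : V → ℝ} (hα : ContDiff ℝ ∞ α) (j : ℕ) :
    (⨆ x ∈ K, ‖iteratedFDeriv ℝ j α x‖)
      ≤ 2 ^ j * ⨆ y ∈ K, ‖iteratedFDeriv ℝ (j+1) (Z i0 α) y‖ := by
  have hg : ContDiff ℝ ∞ (Z i0 α) := Z_contDiff i0 hα
  have hFc : Continuous fun y => ‖iteratedFDeriv ℝ (j+1) (Z i0 α) y‖ :=
    (ContDiff.continuous_iteratedFDeriv (natCast_le_infty (j+1)) hg).norm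
  have hnn : (0:ℝ) ≤ 2 ^ j * ⨆ y ∈ K, ‖iteratedFDeriv ℝ (j+1) (Z i0 α) y‖ :=
    mul_nonneg (by positivity) (biSup_nonneg fun y => norm_nonneg _)
  refine biSup_le (fun x hx => ?_) hnn
  set S := ⨆ y ∈ K, ‖iteratedFDeriv ℝ (j+1) (Z i0 α) y‖ with hSdef
  have hS0 : 0 ≤ S := biSup_nonneg fun y => norm_nonneg _
  have hbdd : ∃ M, ∀ u ∈ K, ‖iteratedFDeriv ℝ (j+1) (Z i0 α) u‖ ≤ M := by
    obtain ⟨z, _, hz⟩ := hKc.exists_isMaxOn ⟨x, hx⟩ hFc.continuousOn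
    exact ⟨‖iteratedFDeriv ℝ (j+1) (Z i0 α) z‖, fun u hu => hz hu⟩
  have hS : ∀ y ∈ K, ‖iteratedFDeriv ℝ (j+1) (Z i0 α) y‖ ≤ S :=
    fun y hy => le_biSup _ hy hbdd
  exact pointwise_bound i0 hKv hK0 hα hx j hS0 hS
end MulFirstCoord


/-- The `r`-norm of a function on a set `K ⊂ ℝⁿ`: the sum over all orders `j ≤ r` of the
supremum over `K` of the norm of the `j`-th derivative. -/
noncomputable def rNorm {n : ℕ} (K : Set (Fin n → ℝ)) (r : ℕ) (f : (Fin n → ℝ) → ℝ) : ℝ :=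
  ∑ j ∈ Finset.range (r + 1), ⨆ x ∈ K, ‖iteratedFDeriv ℝ j f x‖

/-- Let `K ⊂ ℝⁿ` be a compact convex set stable under setting the first
coordinate to `0`, and `r ≥ 0`.  Then there is `C > 0`, depending only on `K`, `n`, `r`,
such that every smooth `α : ℝⁿ → ℝ` satisfies `‖α‖_K^r ≤ C·‖Z(α)‖_K^{r+1}`, where
`Z(α)(x) = x₁·α(x)`.  In particular `Z` is injective on smooth functions. -/
theorem mul_first_coordinate_inverse_estimate
    (n : ℕ) (hn : 0 < n) (K : Set (Fin n → ℝ))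
    (hKc : IsCompact K) (hKv : Convex ℝ K)
    (hK0 : ∀ x ∈ K, Function.update x ⟨0, hn⟩ (0 : ℝ) ∈ K)
    (r : ℕ) :
    (∃ C : ℝ, 0 < C ∧
      ∀ α : (Fin n → ℝ) → ℝ, ContDiff ℝ (⊤ : ℕ∞) α →
        rNorm K r α ≤ C * rNorm K (r + 1) (fun x => x ⟨0, hn⟩ * α x)) ∧
    (∀ α β : (Fin n → ℝ) → ℝ, ContDiff ℝ (⊤ : ℕ∞) α → ContDiff ℝ (⊤ : ℕ∞) β →
      (fun x => x ⟨0, hn⟩ * α x) = (fun x => x ⟨0, hn⟩ * β x) → α = β) := by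

  set i0 : Fin n := ⟨0, hn⟩
  constructor
  · refine ⟨2 ^ r, by positivity, fun α hα => ?_⟩
    have hα' : ContDiff ℝ ∞ α := hα.of_le (by simp)
    set g : (Fin n → ℝ) → ℝ := fun x => x i0 * α x with hgdef
    have hgZ : g = MulFirstCoord.Z i0 α := rfl
    -- termwise bound
    have hterm : ∀ j ∈ Finset.range (r + 1),
        (⨆ x ∈ K, ‖iteratedFDeriv ℝ j α x‖)
          ≤ 2 ^ r * ⨆ y ∈ K, ‖iteratedFDeriv ℝ (j + 1) g y‖ := by
      intro j hj
      have hj' : j ≤ r := Nat.lt_succ_iff.1 (Finset.mem_range.1 hj)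
      have h1 := MulFirstCoord.sup_bound i0 hKc hKv hK0 hα' j
      rw [← hgZ] at h1
      refine h1.trans ?_
      have hnn : (0:ℝ) ≤ ⨆ y ∈ K, ‖iteratedFDeriv ℝ (j + 1) g y‖ :=
        MulFirstCoord.biSup_nonneg fun y => norm_nonneg _
      exact mul_le_mul_of_nonneg_right
        (pow_le_pow_right₀ one_le_two hj') hnn
    calc rNorm K r α
        ≤ ∑ j ∈ Finset.range (r + 1),
            2 ^ r * ⨆ y ∈ K, ‖iteratedFDeriv ℝ (j + 1) g y‖ :=
          Finset.sum_le_sum hterm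
      _ = 2 ^ r * ∑ j ∈ Finset.range (r + 1), ⨆ y ∈ K, ‖iteratedFDeriv ℝ (j + 1) g y‖ := by
          rw [Finset.mul_sum]
      _ ≤ 2 ^ r * rNorm K (r + 1) g := by
          apply mul_le_mul_of_nonneg_left _ (by positivity)
          unfold rNorm
          conv_rhs => rw [Finset.sum_range_succ']
          have h0 : (0:ℝ) ≤ ⨆ y ∈ K, ‖iteratedFDeriv ℝ 0 g y‖ :=
            MulFirstCoord.biSup_nonneg fun y => norm_nonneg _
          linarith
  · intro α β hA hB heq
    have hS : Dense {y : Fin n → ℝ | y i0 ≠ 0} := by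
      intro x
      rw [mem_closure_iff_seq_limit]
      set e : Fin n → ℝ := Pi.single i0 (1:ℝ) with hedef
      by_cases h0 : 0 ≤ x i0
      · refine ⟨fun k => x + (1 / ((k:ℝ) + 1)) • e, fun k => ?_, ?_⟩
        · have : (x + (1 / ((k:ℝ) + 1)) • e) i0 = x i0 + 1 / ((k:ℝ) + 1) := by
            simp [hedef, Pi.single_eq_same]
          simp only [Set.mem_setOf_eq, this]
          positivity
        · have h1 : Filter.Tendsto (fun k : ℕ => (1 / ((k:ℝ) + 1)) • e)
              Filter.atTop (nhds ((0:ℝ) • e)) :=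
            tendsto_one_div_add_atTop_nhds_zero_nat.smul_const e
          have := h1.const_add x
          simpa using this
      · push_neg at h0
        refine ⟨fun k => x + (-(1 / ((k:ℝ) + 1))) • e, fun k => ?_, ?_⟩
        · have : (x + (-(1 / ((k:ℝ) + 1))) • e) i0 = x i0 - 1 / ((k:ℝ) + 1) := by
            simp [hedef, Pi.single_eq_same]; ring
          simp only [Set.mem_setOf_eq, this]
          have hpos : (0:ℝ) < 1 / ((k:ℝ) + 1) := by positivity
          intro hcontra
          nlinarith
        · have h1 : Filter.Tendsto (fun k : ℕ => (-(1 / ((k:ℝ) + 1))) • e)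
              Filter.atTop (nhds ((-(0:ℝ)) • e)) :=
            (tendsto_one_div_add_atTop_nhds_zero_nat.neg).smul_const e
          have := h1.const_add x
          simpa using this
    refine Continuous.ext_on hS (hA.continuous) (hB.continuous) ?_
    intro y hy
    have := congrFun heq y
    exact mul_left_cancel₀ hy this
end
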